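/- The set of maps φ_{f,φ,ψ}: R^3 → R^3 given by (x, y, z) ↦ (x, y f(x) + φ(x), z f(x)^x + ψ(x)) with f, φ, ψ smooth and f > 0 is closed under composition: the composition of two such maps is again of this form, and each is invertible with inverse of the same form. -/

import Mathlib

/-- A map of `ℝ³` of Cartan's form
`(x, y, z) ↦ (x, y f(x) + φ(x), z f(x)^x + ψ(x))` with `f, φ, ψ` smooth, `f > 0`. -/
def IsCartanPGMap (Φ : ℝ × ℝ × ℝ → ℝ × ℝ × ℝ) : Prop :=
  ∃ f φ ψ : ℝ → ℝ,
    ContDiff ℝ (⊤ : ℕ∞) f ∧ ContDiff ℝ (⊤ : ℕ∞) φ ∧ ContDiff ℝ (⊤ : ℕ∞) ψ ∧ (∀ x, 0 < f x) ∧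
    ∀ p : ℝ × ℝ × ℝ,
      Φ p = (p.1, p.2.1 * f p.1 + φ p.1, p.2.2 * (f p.1) ^ p.1 + ψ p.1)

lemma cartan_rpow_smooth {f : ℝ → ℝ} (hf : ContDiff ℝ (⊤ : ℕ∞) f) (hpos : ∀ x, 0 < f x) :
    ContDiff ℝ (⊤ : ℕ∞) (fun x => f x ^ x) := by
  have h : (fun x => f x ^ x) = fun x => Real.exp (x * Real.log (f x)) := by
    funext x; rw [Real.rpow_def_of_pos (hpos x), mul_comm]
  rw [h]
  exact Real.contDiff_exp.comp (contDiff_id.mul (hf.log (fun x => (hpos x).ne')))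

/-- the maps `(x,y,z) ↦ (x, y f(x) + φ(x), z f(x)^x + ψ(x))`
(`f, φ, ψ ∈ C^∞(ℝ)`, `f > 0`) are closed under composition, and each such map is
invertible with inverse of the same form. -/
theorem cartan_pg_maps_closed :
    (∀ Φ₁ Φ₂ : ℝ × ℝ × ℝ → ℝ × ℝ × ℝ, IsCartanPGMap Φ₁ → IsCartanPGMap Φ₂ →
        IsCartanPGMap (Φ₁ ∘ Φ₂)) ∧
    (∀ Φ : ℝ × ℝ × ℝ → ℝ × ℝ × ℝ, IsCartanPGMap Φ →
        ∃ Ψ : ℝ × ℝ × ℝ → ℝ × ℝ × ℝ, IsCartanPGMap Ψ ∧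
          Ψ ∘ Φ = id ∧ Φ ∘ Ψ = id) := by
  constructor
  · rintro Φ₁ Φ₂ ⟨f₁, φ₁, ψ₁, hf₁, hφ₁, hψ₁, hp₁, hΦ₁⟩ ⟨f₂, φ₂, ψ₂, hf₂, hφ₂, hψ₂, hp₂, hΦ₂⟩
    refine ⟨fun x => f₂ x * f₁ x, fun x => φ₂ x * f₁ x + φ₁ x,
      fun x => ψ₂ x * f₁ x ^ x + ψ₁ x, hf₂.mul hf₁, (hφ₂.mul hf₁).add hφ₁,
      (hψ₂.mul (cartan_rpow_smooth hf₁ hp₁)).add hψ₁,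
      fun x => mul_pos (hp₂ x) (hp₁ x), fun p => ?_⟩
    simp only [Function.comp_apply, hΦ₂ p, hΦ₁]
    refine Prod.ext rfl (Prod.ext (by ring) ?_)
    simp only
    rw [Real.mul_rpow (hp₂ p.1).le (hp₁ p.1).le]
    ring
  · rintro Φ ⟨f, φ, ψ, hf, hφ, hψ, hp, hΦ⟩
    refine ⟨fun p => (p.1, p.2.1 * (f p.1)⁻¹ + (-φ p.1 / f p.1),
        p.2.2 * (f p.1)⁻¹ ^ p.1 + (-ψ p.1 / f p.1 ^ p.1)),
      ⟨fun x => (f x)⁻¹, fun x => -φ x / f x, fun x => -ψ x / f x ^ x,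
        hf.inv (fun x => (hp x).ne'), hφ.neg.div hf (fun x => (hp x).ne'),
        hψ.neg.div (cartan_rpow_smooth hf hp) (fun x => (Real.rpow_pos_of_pos (hp x) x).ne'),
        fun x => inv_pos.mpr (hp x), fun p => rfl⟩, ?_, ?_⟩
    · funext p
      simp only [Function.comp_apply, hΦ p, id_eq]
      have h1 : f p.1 ≠ 0 := (hp p.1).ne'
      have h2 : f p.1 ^ p.1 ≠ 0 := (Real.rpow_pos_of_pos (hp p.1) p.1).ne'
      refine Prod.ext rfl (Prod.ext ?_ ?_)
      · field_simp
        ring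
      · simp only
        rw [Real.inv_rpow (hp p.1).le]
        field_simp
        ring
    · funext p
      have h1 : f p.1 ≠ 0 := (hp p.1).ne'
      have h2 : f p.1 ^ p.1 ≠ 0 := (Real.rpow_pos_of_pos (hp p.1) p.1).ne'
      simp only [Function.comp_apply, hΦ, id_eq]
      refine Prod.ext rfl (Prod.ext ?_ ?_)
      · field_simp
        ring
      · simp only
        rw [Real.inv_rpow (hp p.1).le]
        field_simp
        ring
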